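/- arXiv:2204.10237 — 2 statements merged into one kernel-verified Lean document; each statement's English description precedes it below -/
import Mathlib

section
/- Let A and B be m×n complex matrices, L(λ) = λB + A, let α, β ∈ ℂ with α ≠ β, and let d₁, d₂ ≥ 1. Let Q be the d₂m × d₁n block matrix (with d₂×d₁ blocks of size m×n) whose (1, d₁) block equals B and all of whose other blocks are zero. Then the block matrix [[P_α^{d₁}(L), 0], [Q, P_β^{d₂}(L)]] has the same rank as the block-diagonal matrix diag(P_α^{d₁}(L), P_β^{d₂}(L)); that is, its rank equals rank(P_α^{d₁}(L)) + rank(P_β^{d₂}(L)). -/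
/-!
Write `P_μ^d(L) = 1 ⊗ A + J_μ ⊗ B` with `J_μ = μ • 1 + N` a lower Jordan block, and the coupling
block as `C ⊗ B`. For any `Z`, multiplying on the left by `[[1, 0], [-(Z ⊗ 1), 1]]` and on the right
by `[[1, 0], [Z ⊗ 1, 1]]` turns the coupling block into `C ⊗ B - (Z J_α - J_β Z) ⊗ B`, so it
suffices to solve the Sylvester equation `Z J_α - J_β Z = C`. The operator `Z ↦ Z J_α - J_β Z` is
`α - β` plus the nilpotent operator `Z ↦ Z N - N Z`, hence invertible when `α ≠ β`.
-/

/-- For the pencil `L(λ) = λB + A`, the `dm × dn` block matrix `P_μ^d(L)` with diagonal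
blocks `L(μ) = μB + A` and first-subdiagonal blocks `B`. -/
def pencilBlockMat {m n : ℕ} (A B : Matrix (Fin m) (Fin n) ℂ) (μ : ℂ) (d : ℕ) :
    Matrix (Fin d × Fin m) (Fin d × Fin n) ℂ :=
  fun p q =>
    if p.1 = q.1 then (μ • B + A) p.2 q.2
    else if (p.1 : ℕ) = (q.1 : ℕ) + 1 then B p.2 q.2 else 0

open Matrix Module
open scoped Kronecker

section Field

variable {K : Type*} [Field K]

theorem Submodule.finrank_prod {M₁ M₂ : Type*} [AddCommGroup M₁] [Module K M₁]
    [AddCommGroup M₂] [Module K M₂] (p : Submodule K M₁) (q : Submodule K M₂)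
    [FiniteDimensional K p] [FiniteDimensional K q] :
    finrank K (p.prod q) = finrank K p + finrank K q := by
  have hrange : (p.subtype.prodMap q.subtype).range = p.prod q := by
    rw [LinearMap.range_prodMap, Submodule.range_subtype, Submodule.range_subtype]
  rw [← hrange, LinearMap.finrank_range_of_inj
    (Function.Injective.prodMap p.injective_subtype q.injective_subtype), Module.finrank_prod]

theorem LinearMap.finrank_range_prodMap {M₁ M₂ M₃ M₄ : Type*}
    [AddCommGroup M₁] [Module K M₁] [AddCommGroup M₂] [Module K M₂]
    [AddCommGroup M₃] [Module K M₃] [AddCommGroup M₄] [Module K M₄]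
    [FiniteDimensional K M₃] [FiniteDimensional K M₄] (f : M₁ →ₗ[K] M₃) (g : M₂ →ₗ[K] M₄) :
    finrank K (f.prodMap g).range = finrank K f.range + finrank K g.range := by
  rw [LinearMap.range_prodMap, Submodule.finrank_prod]

namespace Matrix

theorem IsLowerTriangular.isNilpotent {R n : Type*} [CommRing R] [Fintype n] [LinearOrder n]
    {M : Matrix n n R} (hM : M.IsLowerTriangular) (hdiag : ∀ i, M i i = 0) :
    IsNilpotent M := by
  rw [← isNilpotent_transpose_iff]
  refine ⟨Fintype.card n, ?_⟩
  have hCH := aeval_self_charpoly Mᵀ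
  rw [charpoly_of_isUpperTriangular Mᵀ hM.transpose] at hCH
  simpa [hdiag] using hCH

theorem rank_fromBlocks_zero₁₂_zero₂₁ {m₁ m₂ n₁ n₂ : Type*} [Fintype m₁] [Fintype m₂]
    [Fintype n₁] [Fintype n₂] [DecidableEq n₁] [DecidableEq n₂]
    (A : Matrix m₁ n₁ K) (D : Matrix m₂ n₂ K) :
    (fromBlocks A 0 0 D).rank = A.rank + D.rank := by
  have hlin : toLin ((Pi.basisFun K n₁).prod (Pi.basisFun K n₂))
      ((Pi.basisFun K m₁).prod (Pi.basisFun K m₂)) (fromBlocks A 0 0 D)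
      = (toLin' A).prodMap (toLin' D) := by
    apply (LinearMap.toMatrix ((Pi.basisFun K n₁).prod (Pi.basisFun K n₂))
      ((Pi.basisFun K m₁).prod (Pi.basisFun K m₂))).symm_apply_eq.2
    ext (i | i) (j | j) <;> simp [LinearMap.toMatrix_apply]
  rw [rank_eq_finrank_range_toLin _ ((Pi.basisFun K m₁).prod (Pi.basisFun K m₂))
      ((Pi.basisFun K n₁).prod (Pi.basisFun K n₂)), hlin, LinearMap.finrank_range_prodMap]
  rfl

theorem rank_fromBlocks_zero₁₂_mul_add_mul {m₁ m₂ n₁ n₂ : Type*} [Fintype m₁] [Fintype m₂]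
    [Fintype n₁] [Fintype n₂] [DecidableEq m₁] [DecidableEq m₂] [DecidableEq n₁] [DecidableEq n₂]
    (M₁ : Matrix m₁ n₁ K) (M₂ : Matrix m₂ n₂ K) (X : Matrix m₂ m₁ K) (Y : Matrix n₂ n₁ K) :
    (fromBlocks M₁ 0 (X * M₁ + M₂ * Y) M₂).rank = M₁.rank + M₂.rank := by
  have hdiag : (fromBlocks 1 0 (-X) 1 : Matrix (m₁ ⊕ m₂) (m₁ ⊕ m₂) K)
      * fromBlocks M₁ 0 (X * M₁ + M₂ * Y) M₂
      * (fromBlocks 1 0 (-Y) 1 : Matrix (n₁ ⊕ n₂) (n₁ ⊕ n₂) K) = fromBlocks M₁ 0 0 M₂ := by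
    simp [fromBlocks_multiply, Matrix.neg_mul, Matrix.mul_neg]
  rw [← rank_fromBlocks_zero₁₂_zero₂₁, ← hdiag, rank_mul_eq_left_of_isUnit_det _ _ (by simp),
    rank_mul_eq_right_of_isUnit_det _ _ (by simp)]

theorem exists_mul_sub_mul_eq_of_isNilpotent {ι₁ ι₂ : Type*} [Fintype ι₁] [Fintype ι₂]
    [DecidableEq ι₁] [DecidableEq ι₂] {N₁ : Matrix ι₁ ι₁ K} {N₂ : Matrix ι₂ ι₂ K}
    (hN₁ : IsNilpotent N₁) (hN₂ : IsNilpotent N₂) {α β : K} (hαβ : α ≠ β)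
    (C : Matrix ι₂ ι₁ K) : ∃ Z : Matrix ι₂ ι₁ K, Z * (α • 1 + N₁) - (β • 1 + N₂) * Z = C := by
  set T : Module.End K (Matrix ι₂ ι₁ K) :=
    mulRightLinearMap ι₂ K N₁ - mulLeftLinearMap ι₁ K N₂
  have hT : IsNilpotent T := by
    refine Commute.isNilpotent_sub (commute_mulLeftLinearMap_mulRightLinearMap N₂ N₁).symm ?_ ?_
    · obtain ⟨k, hk⟩ := hN₁
      exact ⟨k, by rw [pow_mulRightLinearMap, hk, mulRightLinearMap_zero_eq_zero]⟩
    · obtain ⟨k, hk⟩ := hN₂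
      exact ⟨k, by rw [pow_mulLeftLinearMap, hk, mulLeftLinearMap_zero_eq_zero]⟩
  have hunit : IsUnit (algebraMap K _ (α - β) + T) :=
    hT.isUnit_add_left_of_commute ((sub_ne_zero.2 hαβ).isUnit.map _) (Algebra.commutes _ _).symm
  obtain ⟨Z, hZ⟩ := ((Module.End.isUnit_iff _).1 hunit).2 C
  refine ⟨Z, ?_⟩
  rw [← hZ]
  simp only [T, LinearMap.add_apply, LinearMap.sub_apply, algebraMap_end_apply,
    mulRightLinearMap_apply, mulLeftLinearMap_apply, Matrix.mul_add, Matrix.add_mul,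
    Matrix.mul_smul, smul_mul, Matrix.mul_one, Matrix.one_mul, sub_smul]
  abel

theorem rank_fromBlocks_kronecker_of_mul_sub_mul_eq {ι₁ ι₂ m n : Type*} [Fintype ι₁]
    [Fintype ι₂] [Fintype m] [Fintype n] [DecidableEq ι₁] [DecidableEq ι₂] [DecidableEq m]
    [DecidableEq n] (A B : Matrix m n K) {J₁ : Matrix ι₁ ι₁ K} {J₂ : Matrix ι₂ ι₂ K}
    {C Z : Matrix ι₂ ι₁ K} (hZ : Z * J₁ - J₂ * Z = C) :
    (fromBlocks (1 ⊗ₖ A + J₁ ⊗ₖ B) 0 (C ⊗ₖ B) (1 ⊗ₖ A + J₂ ⊗ₖ B)).rank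
      = (1 ⊗ₖ A + J₁ ⊗ₖ B).rank + (1 ⊗ₖ A + J₂ ⊗ₖ B).rank := by
  have hC : C ⊗ₖ B = Z ⊗ₖ (1 : Matrix m m K) * (1 ⊗ₖ A + J₁ ⊗ₖ B)
      + (1 ⊗ₖ A + J₂ ⊗ₖ B) * -(Z ⊗ₖ (1 : Matrix n n K)) := by
    rw [sub_eq_iff_eq_add'] at hZ
    simp only [Matrix.mul_add, Matrix.add_mul, Matrix.mul_neg, ← mul_kronecker_mul,
      Matrix.one_mul, Matrix.mul_one, hZ, add_kronecker]
    abel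
  rw [hC, rank_fromBlocks_zero₁₂_mul_add_mul]

end Matrix

end Field

def lowerShift (R : Type*) [Zero R] [One R] (d : ℕ) : Matrix (Fin d) (Fin d) R :=
  of fun i j => if (i : ℕ) = j + 1 then 1 else 0

theorem isNilpotent_lowerShift (R : Type*) [CommRing R] (d : ℕ) :
    IsNilpotent (lowerShift R d) :=
  IsLowerTriangular.isNilpotent
    (fun i j hij => if_neg (by have : (i : ℕ) < j := hij; omega))
    (fun _ => if_neg (by omega))

theorem pencilBlockMat_eq_kronecker {m n : ℕ} (A B : Matrix (Fin m) (Fin n) ℂ) (μ : ℂ) (d : ℕ) :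
    pencilBlockMat A B μ d = 1 ⊗ₖ A + (μ • 1 + lowerShift ℂ d) ⊗ₖ B := by
  ext ⟨i, r⟩ ⟨j, s⟩
  by_cases hij : i = j
  · subst hij
    simp [pencilBlockMat, lowerShift, add_comm]
  · simp [pencilBlockMat, lowerShift, hij]

theorem rank_fromBlocks_pencilBlockMat_kronecker {m n d₁ d₂ : ℕ}
    (A B : Matrix (Fin m) (Fin n) ℂ) {α β : ℂ} (hαβ : α ≠ β) (C : Matrix (Fin d₂) (Fin d₁) ℂ) :
    (fromBlocks (pencilBlockMat A B α d₁) 0 (C ⊗ₖ B) (pencilBlockMat A B β d₂)).rank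
      = (pencilBlockMat A B α d₁).rank + (pencilBlockMat A B β d₂).rank := by
  obtain ⟨Z, hZ⟩ := exists_mul_sub_mul_eq_of_isNilpotent (isNilpotent_lowerShift ℂ d₁)
    (isNilpotent_lowerShift ℂ d₂) hαβ C
  simp only [pencilBlockMat_eq_kronecker]
  exact rank_fromBlocks_kronecker_of_mul_sub_mul_eq A B hZ

theorem rank_fromBlocks_pencil_general (m n d₁ d₂ : ℕ)
    (A B : Matrix (Fin m) (Fin n) ℂ) (α β : ℂ) (hαβ : α ≠ β) :
    (Matrix.fromBlocks (pencilBlockMat A B α d₁) 0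
        (fun p q =>
          if (p.1 : ℕ) = 0 ∧ (q.1 : ℕ) = d₁ - 1 then B p.2 q.2 else 0 :
          Matrix (Fin d₂ × Fin m) (Fin d₁ × Fin n) ℂ)
        (pencilBlockMat A B β d₂)).rank
      = (pencilBlockMat A B α d₁).rank + (pencilBlockMat A B β d₂).rank := by
  have hQ : (fun p q => if (p.1 : ℕ) = 0 ∧ (q.1 : ℕ) = d₁ - 1 then B p.2 q.2 else 0 :
        Matrix (Fin d₂ × Fin m) (Fin d₁ × Fin n) ℂ)
      = (of fun (i : Fin d₂) (j : Fin d₁) => if (i : ℕ) = 0 ∧ (j : ℕ) = d₁ - 1 then 1 else 0)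
          ⊗ₖ B := by
    ext ⟨i, r⟩ ⟨j, s⟩
    simp [ite_mul]
  rw [hQ]
  exact rank_fromBlocks_pencilBlockMat_kronecker A B hαβ _

/-- For `α ≠ β`, the coupled block matrix `[[P_α^{d₁}(L), 0], [Q, P_β^{d₂}(L)]]`, where `Q`
has a single block `B` in its `(1, d₁)` block position, has the same rank as
`diag(P_α^{d₁}(L), P_β^{d₂}(L))`, namely `rank P_α^{d₁}(L) + rank P_β^{d₂}(L)`. -/
theorem rank_fromBlocks_pencil (m n d₁ d₂ : ℕ) (hd₁ : 1 ≤ d₁) (hd₂ : 1 ≤ d₂)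
    (A B : Matrix (Fin m) (Fin n) ℂ) (α β : ℂ) (hαβ : α ≠ β) :
    (Matrix.fromBlocks (pencilBlockMat A B α d₁) 0
        (fun p q =>
          if (p.1 : ℕ) = 0 ∧ (q.1 : ℕ) = d₁ - 1 then B p.2 q.2 else 0 :
          Matrix (Fin d₂ × Fin m) (Fin d₁ × Fin n) ℂ)
        (pencilBlockMat A B β d₂)).rank
      = (pencilBlockMat A B α d₁).rank + (pencilBlockMat A B β d₂).rank :=
  rank_fromBlocks_pencil_general m n d₁ d₂ A B α β hαβ
end

section
/- Let L(λ) = λB + A be an m×n complex matrix pencil which is a block-diagonal direct sum of canonical blocks, each of one of the following four types: (i) a Jordan block at a finite eigenvalue μ₀ ∈ ℂ, i.e., the k×k pencil λI_k + J_k(μ₀), where J_k(μ₀) has −μ₀ on the diagonal, 1 on the superdiagonal, and zeros elsewhere (k ≥ 1); (ii) a Jordan block at infinity, i.e., the k×k pencil λN_k + I_k, where N_k is the nilpotent upper-shift matrix (k ≥ 1); (iii) a right singular block R_k(λ), the k×(k+1) pencil whose (i,i) entries are λ and whose (i,i+1) entries are 1 (k ≥ 0); (iv) a left singular block R_k(λ)ᵀ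 (k ≥ 0). Then for every μ ∈ ℂ and every d ≥ 1, the nullity of P_μ^d(L) (i.e., dn − rank P_μ^d(L)) equals Σ min(d, k_j) + d·p, where the sum ranges over the type-(i) blocks whose eigenvalue μ₀ equals μ (k_j being their sizes) and p is the number of type-(iii) blocks. -/
/-- A canonical block of the Kronecker canonical form. Sizes are encoded so that all four
types are allowed exactly in their natural ranges: Jordan blocks (finite or infinite
eigenvalue) have size `(k+1) × (k+1)` with `k : ℕ` (i.e. size at least 1), a right singular
block `R_k(λ)` has size `k × (k+1)` with `k ≥ 0`, and a left singular block `R_k(λ)ᵀ` has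
size `(k+1) × k` with `k ≥ 0`. -/
inductive KroneckerBlock : Type
  | jordanFin (k : ℕ) (μ₀ : ℂ) : KroneckerBlock  -- `λ I_{k+1} + J_{k+1}(μ₀)`
  | jordanInf (k : ℕ) : KroneckerBlock           -- `λ N_{k+1} + I_{k+1}`
  | rightSing (k : ℕ) : KroneckerBlock           -- `R_k(λ)`, size `k × (k+1)`
  | leftSing (k : ℕ) : KroneckerBlock            -- `R_k(λ)ᵀ`, size `(k+1) × k`

namespace KroneckerBlock

/-- Number of rows of a canonical block. -/
def rows : KroneckerBlock → ℕ
  | jordanFin k _ => k + 1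
  | jordanInf k => k + 1
  | rightSing k => k
  | leftSing k => k + 1

/-- Number of columns of a canonical block. -/
def cols : KroneckerBlock → ℕ
  | jordanFin k _ => k + 1
  | jordanInf k => k + 1
  | rightSing k => k + 1
  | leftSing k => k

/-- The coefficient of `λ` in the canonical block pencil. -/
def Bmat : (b : KroneckerBlock) → Matrix (Fin b.rows) (Fin b.cols) ℂ
  | jordanFin _ _ => fun i j => if (j : ℕ) = (i : ℕ) then 1 else 0
  | jordanInf _ => fun i j => if (j : ℕ) = (i : ℕ) + 1 then 1 else 0
  | rightSing _ => fun i j => if (j : ℕ) = (i : ℕ) then 1 else 0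
  | leftSing _ => fun i j => if (i : ℕ) = (j : ℕ) then 1 else 0

/-- The constant coefficient in the canonical block pencil. -/
def Amat : (b : KroneckerBlock) → Matrix (Fin b.rows) (Fin b.cols) ℂ
  | jordanFin _ μ₀ => fun i j =>
      if (j : ℕ) = (i : ℕ) then -μ₀ else if (j : ℕ) = (i : ℕ) + 1 then 1 else 0
  | jordanInf _ => fun i j => if (j : ℕ) = (i : ℕ) then 1 else 0
  | rightSing _ => fun i j => if (j : ℕ) = (i : ℕ) + 1 then 1 else 0
  | leftSing _ => fun i j => if (i : ℕ) = (j : ℕ) + 1 then 1 else 0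

/-- Whether the block is a right singular block `R_k(λ)`. -/
def isRightSing : KroneckerBlock → Bool
  | rightSing _ => true
  | _ => false

/-- The contribution `min(d, size)` of a type-(i) block with eigenvalue `μ`, and `0` for
any other block. -/
noncomputable def jordanContribution (d : ℕ) (μ : ℂ) : KroneckerBlock → ℕ
  | jordanFin k μ₀ => if μ₀ = μ then min d (k + 1) else 0
  | _ => 0

end KroneckerBlock

/-- For a pencil `L(λ) = λB + A` with coefficients indexed by arbitrary finite types, the
block matrix `P_μ^d(L)` with diagonal blocks `L(μ) = μB + A` and first-subdiagonal blocks
`B`. -/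
def pencilBlockMat' {I J : Type*} (A B : Matrix I J ℂ) (μ : ℂ) (d : ℕ) :
    Matrix (Fin d × I) (Fin d × J) ℂ :=
  fun p q =>
    if p.1 = q.1 then (μ • B + A) p.2 q.2
    else if (p.1 : ℕ) = (q.1 : ℕ) + 1 then B p.2 q.2 else 0

/-!
The nullity of `P_μ^d(L)` is additive over the diagonal blocks of `L`, so it suffices to compute
it block by block. Row `p` of `P_μ^d(L) x = 0` reads `L(μ) x_p + B x_{p-1} = 0`. Hence if `L(μ)`
is injective (a Jordan block at `μ₀ ≠ μ` or at infinity, or a left singular block) the kernel is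
trivial. For a Jordan block `B = I`, so the rows say `x_{p-1} = -L(μ) x_p` and `L(μ) x_0 = 0`:
the last slice `x_{d-1}` determines `x` and ranges over `ker L(μ)^d`; at `μ₀ = μ` the matrix
`L(μ)` is the nilpotent shift, whose `d`-th power has nullity `min(d, k)`. Finally `R_k` is the
transpose of `R_kᵀ`, and transposing `P_μ^d(L)` while reversing the order of the blocks gives
`P_μ^d(Lᵀ)`; so `P_μ^d(R_k)` has the rank `d k` of the injective `P_μ^d(R_kᵀ)`, and nullity `d`.
-/

theorem Fin.sum_ite_val_eq {M : Type*} [AddCommMonoid M] {n : ℕ} (a : ℕ) (f : Fin n → M) :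
    ∑ j : Fin n, (if (j : ℕ) = a then f j else 0) = if h : a < n then f ⟨a, h⟩ else 0 := by
  split_ifs with h
  · rw [Fintype.sum_eq_single ⟨a, h⟩ fun j hj => if_neg fun e => hj (Fin.ext e)]
    simp
  · exact Finset.sum_eq_zero fun j _ => if_neg fun (e : (j : ℕ) = a) => h (e ▸ j.isLt)

namespace Matrix

section Nullity

variable {K : Type*} [Field K] {m n : Type*} [Fintype n]

noncomputable def nullity (M : Matrix m n K) : ℕ :=
  Module.finrank K (LinearMap.ker M.mulVecLin)

theorem rank_add_nullity (M : Matrix m n K) : M.rank + M.nullity = Fintype.card n := by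
  rw [rank, nullity, LinearMap.finrank_range_add_finrank_ker, Module.finrank_fintype_fun_eq_card]

theorem nullity_eq_zero_of_injective {M : Matrix m n K} (hM : Function.Injective M.mulVec) :
    M.nullity = 0 := by
  rw [nullity, LinearMap.ker_eq_bot.2 hM, finrank_bot]

theorem nullity_submatrix_equiv {m' n' : Type*} [Fintype n'] (M : Matrix m n K)
    (e₁ : m' ≃ m) (e₂ : n' ≃ n) : (M.submatrix e₁ e₂).nullity = M.nullity := by
  have h₁ := (M.submatrix e₁ e₂).rank_add_nullity
  have h₂ := M.rank_add_nullity
  rw [rank_submatrix, Fintype.card_congr e₂] at h₁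
  omega

theorem nullity_neg (M : Matrix m n K) : (-M).nullity = M.nullity := by
  have : LinearMap.ker (-M).mulVecLin = LinearMap.ker M.mulVecLin := by
    ext v; simp
  rw [nullity, nullity, this]

theorem nullity_neg_pow [DecidableEq n] (M : Matrix n n K) (d : ℕ) :
    ((-M) ^ d).nullity = (M ^ d).nullity := by
  rcases Nat.even_or_odd d with h | h
  · rw [h.neg_pow]
  · rw [h.neg_pow, nullity_neg]

variable {ι : Type*} [Fintype ι] [DecidableEq ι] {m n : ι → Type*} [∀ i, Fintype (n i)]

theorem blockDiagonal'_mulVec_apply (M : ∀ i, Matrix (m i) (n i) K) (x : (Σ i, n i) → K)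
    (i : ι) (a : m i) :
    (blockDiagonal' M *ᵥ x) ⟨i, a⟩ = (M i *ᵥ fun b => x ⟨i, b⟩) a := by
  simp [mulVec, dotProduct, Fintype.sum_sigma, blockDiagonal'_apply]

theorem nullity_blockDiagonal' (M : ∀ i, Matrix (m i) (n i) K) :
    (blockDiagonal' M).nullity = ∑ i, (M i).nullity := by
  have mem_ker {x : (Σ i, n i) → K} :
      x ∈ LinearMap.ker (blockDiagonal' M).mulVecLin ↔
        ∀ i, (fun b => x ⟨i, b⟩) ∈ LinearMap.ker (M i).mulVecLin := by
    simp only [LinearMap.mem_ker, mulVecLin_apply, funext_iff, Sigma.forall,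
      blockDiagonal'_mulVec_apply, Pi.zero_apply]
  let e : LinearMap.ker (blockDiagonal' M).mulVecLin ≃ₗ[K]
      ∀ i, LinearMap.ker (M i).mulVecLin :=
    { toFun := fun x i => ⟨fun b => x.1 ⟨i, b⟩, mem_ker.1 x.2 i⟩
      invFun := fun y => ⟨fun s => (y s.1).1 s.2, mem_ker.2 fun i => (y i).2⟩
      map_add' := fun _ _ => rfl
      map_smul' := fun _ _ => rfl
      left_inv := fun _ => rfl
      right_inv := fun _ => rfl }
  rw [nullity, e.finrank_eq, Module.finrank_pi_fintype]
  rfl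

end Nullity

def upperShift (R : Type*) [Zero R] [One R] (n : ℕ) : Matrix (Fin n) (Fin n) R :=
  fun i j => if (j : ℕ) = i + 1 then 1 else 0

section UpperShift

variable {R : Type*} [Semiring R] {n : ℕ}

theorem upperShift_mulVec_apply (v : Fin n → R) (i : Fin n) :
    (upperShift R n *ᵥ v) i = if h : (i : ℕ) + 1 < n then v ⟨i + 1, h⟩ else 0 := by
  simp only [mulVec, dotProduct, upperShift, ite_mul, one_mul, zero_mul]
  exact Fin.sum_ite_val_eq _ _

theorem upperShift_pow_mulVec_apply (d : ℕ) (v : Fin n → R) (i : Fin n) :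
    (upperShift R n ^ d *ᵥ v) i = if h : (i : ℕ) + d < n then v ⟨i + d, h⟩ else 0 := by
  induction d generalizing i with
  | zero => simp
  | succ d ih =>
    rw [pow_succ', ← mulVec_mulVec, upperShift_mulVec_apply]
    by_cases h : (i : ℕ) + 1 < n
    · simp only [dif_pos h, ih, Nat.add_right_comm _ 1, Nat.add_assoc]
    · rw [dif_neg h, dif_neg (by omega)]

theorem isNilpotent_upperShift : IsNilpotent (upperShift R n) :=
  ⟨n, mulVec_injective <| funext fun v => funext fun i => by
    simp [upperShift_pow_mulVec_apply]⟩

end UpperShift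

section Field

variable {K : Type*} [Field K]

theorem nullity_upperShift_pow (n d : ℕ) :
    (upperShift K n ^ d).nullity = min d n := by
  let f : Fin (n - d) → Fin n := fun t => ⟨t + d, by omega⟩
  have hf : Function.Injective f := fun s t h => Fin.ext (by simpa [f] using h)
  have hker : LinearMap.ker (upperShift K n ^ d).mulVecLin =
      LinearMap.ker (LinearMap.funLeft K K f) := by
    ext v
    simp only [LinearMap.mem_ker, mulVecLin_apply, LinearMap.funLeft_apply, funext_iff,
      upperShift_pow_mulVec_apply, Pi.zero_apply]
    constructor
    · intro h t
      simpa [dif_pos (show (t : ℕ) + d < n by omega)] using h ⟨t, by omega⟩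
    · intro h i
      split_ifs with hi
      exacts [h ⟨i, by omega⟩, rfl]
  have hrank := LinearMap.finrank_range_add_finrank_ker (LinearMap.funLeft K K f)
  rw [LinearMap.range_eq_top.2 (LinearMap.funLeft_surjective_of_injective _ _ f hf),
    finrank_top] at hrank
  simp only [Module.finrank_fintype_fun_eq_card, Fintype.card_fin] at hrank
  rw [nullity, hker]
  omega

theorem isUnit_smul_one_add_upperShift {c : K} (hc : c ≠ 0) (n : ℕ) :
    IsUnit (c • 1 + upperShift K n) := by
  rw [← Algebra.algebraMap_eq_smul_one]
  exact isNilpotent_upperShift.isUnit_add_left_of_commute ((isUnit_iff_ne_zero.2 hc).map _)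
    (Algebra.commutes c _).symm

theorem isUnit_smul_upperShift_add_one (c : K) (n : ℕ) :
    IsUnit (c • upperShift K n + 1) :=
  (isNilpotent_upperShift.smul c).isUnit_add_one

end Field

end Matrix

section Pencil

open Matrix

variable {I J : Type*} [Fintype J] (A B : Matrix I J ℂ) (μ : ℂ) {d : ℕ}

theorem pencilBlockMat'_mulVec_apply (x : Fin d × J → ℂ) (p : Fin d) (i : I) :
    (pencilBlockMat' A B μ d *ᵥ x) (p, i) =
      ∑ q : Fin d, if p = q then ((μ • B + A) *ᵥ Function.curry x q) i
        else if (p : ℕ) = q + 1 then (B *ᵥ Function.curry x q) i else 0 := by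
  simp only [mulVec, dotProduct, Fintype.sum_prod_type, pencilBlockMat']
  refine Finset.sum_congr rfl fun q _ => ?_
  split_ifs <;> simp

theorem pencilBlockMat'_mulVec_apply_of_val_eq_zero (x : Fin d × J → ℂ) {p : Fin d}
    (hp : (p : ℕ) = 0) (i : I) :
    (pencilBlockMat' A B μ d *ᵥ x) (p, i) = ((μ • B + A) *ᵥ Function.curry x p) i := by
  rw [pencilBlockMat'_mulVec_apply, Fintype.sum_eq_single p fun q hq => by
    rw [if_neg (Ne.symm hq), if_neg (by omega)]]
  simp

theorem pencilBlockMat'_mulVec_apply_of_val_eq_succ (x : Fin d × J → ℂ) {p q : Fin d}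
    (hpq : (p : ℕ) = q + 1) (i : I) :
    (pencilBlockMat' A B μ d *ᵥ x) (p, i) =
      ((μ • B + A) *ᵥ Function.curry x p) i + (B *ᵥ Function.curry x q) i := by
  have hne : p ≠ q := fun e => by subst e; omega
  rw [pencilBlockMat'_mulVec_apply, Fintype.sum_eq_add p q hne fun r hr => by
    rw [if_neg (Ne.symm hr.1), if_neg fun e => hr.2 (Fin.ext (by omega))]]
  simp [hpq, hne]

theorem pencilBlockMat'_mulVec_eq_zero_iff (x : Fin d × J → ℂ) :
    pencilBlockMat' A B μ d *ᵥ x = 0 ↔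
      (∀ p : Fin d, (p : ℕ) = 0 → (μ • B + A) *ᵥ Function.curry x p = 0) ∧
      ∀ p q : Fin d, (p : ℕ) = q + 1 →
        (μ • B + A) *ᵥ Function.curry x p + B *ᵥ Function.curry x q = 0 := by
  simp only [funext_iff, Prod.forall, Pi.zero_apply, Pi.add_apply]
  constructor
  · refine fun h => ⟨fun p hp i => ?_, fun p q hpq i => ?_⟩
    · rw [← pencilBlockMat'_mulVec_apply_of_val_eq_zero A B μ x hp, h]
    · rw [← pencilBlockMat'_mulVec_apply_of_val_eq_succ A B μ x hpq, h]
  · rintro ⟨h₀, hsucc⟩ p i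
    by_cases hp : (p : ℕ) = 0
    · rw [pencilBlockMat'_mulVec_apply_of_val_eq_zero A B μ x hp, h₀ p hp]
    · have hpq : (p : ℕ) = (⟨p - 1, by omega⟩ : Fin d) + 1 := by simp; omega
      rw [pencilBlockMat'_mulVec_apply_of_val_eq_succ A B μ x hpq, hsucc p _ hpq]

theorem pencilBlockMat'_mulVec_injective (hL : Function.Injective (μ • B + A).mulVec) :
    Function.Injective (pencilBlockMat' A B μ d).mulVec := by
  refine (injective_iff_map_eq_zero (pencilBlockMat' A B μ d).mulVecLin).2 fun x hx => ?_
  rw [mulVecLin_apply, pencilBlockMat'_mulVec_eq_zero_iff] at hx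
  have slice_eq_zero (n : ℕ) : ∀ p : Fin d, (p : ℕ) = n → Function.curry x p = 0 := by
    induction n with
    | zero => exact fun p hp => hL (by rw [hx.1 p hp, mulVec_zero])
    | succ n ih =>
      intro p hp
      have hrow := hx.2 p ⟨n, by omega⟩ hp
      rw [ih ⟨n, by omega⟩ rfl, mulVec_zero, add_zero] at hrow
      exact hL (hrow.trans (mulVec_zero _).symm)
  exact funext fun ⟨p, j⟩ => congrFun (slice_eq_zero p p rfl) j

theorem rank_pencilBlockMat'_transpose {I J : Type*} [Fintype I] [Fintype J]
    (A B : Matrix I J ℂ) (μ : ℂ) (d : ℕ) :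
    (pencilBlockMat' Aᵀ Bᵀ μ d).rank = (pencilBlockMat' A B μ d).rank := by
  have hrev : pencilBlockMat' Aᵀ Bᵀ μ d = (pencilBlockMat' A B μ d)ᵀ.submatrix
      (Fin.revPerm.prodCongr (Equiv.refl J)) (Fin.revPerm.prodCongr (Equiv.refl I)) := by
    ext ⟨p, j⟩ ⟨q, i⟩
    have := p.isLt
    have := q.isLt
    simp only [pencilBlockMat', submatrix_apply, transpose_apply, Equiv.prodCongr_apply,
      Prod.map, Fin.revPerm_apply, Equiv.refl_apply, Fin.rev_inj, Fin.val_rev, eq_comm (a := q)]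
    split_ifs <;> first | rfl | omega
  rw [hrev, rank_submatrix, rank_transpose]

theorem nullity_pencilBlockMat'_blockDiagonal' {ι : Type*} [Fintype ι] [DecidableEq ι]
    {m n : ι → Type*} [∀ i, Fintype (n i)] (A B : ∀ i, Matrix (m i) (n i) ℂ) (μ : ℂ) (d : ℕ) :
    (pencilBlockMat' (blockDiagonal' A) (blockDiagonal' B) μ d).nullity =
      ∑ i, (pencilBlockMat' (A i) (B i) μ d).nullity := by
  let em : Fin d × (Σ i, m i) ≃ Σ i, Fin d × m i :=
    (Equiv.prodComm _ _).trans ((Equiv.sigmaProdDistrib _ _).trans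
      (Equiv.sigmaCongrRight fun _ => Equiv.prodComm _ _))
  let en : Fin d × (Σ i, n i) ≃ Σ i, Fin d × n i :=
    (Equiv.prodComm _ _).trans ((Equiv.sigmaProdDistrib _ _).trans
      (Equiv.sigmaCongrRight fun _ => Equiv.prodComm _ _))
  have hblock : pencilBlockMat' (blockDiagonal' A) (blockDiagonal' B) μ d =
      (blockDiagonal' fun i => pencilBlockMat' (A i) (B i) μ d).submatrix em en := by
    ext ⟨p, i, a⟩ ⟨q, j, b⟩
    by_cases hij : i = j
    · subst hij
      simp [pencilBlockMat', em, en, blockDiagonal'_apply_eq]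
    · simp [pencilBlockMat', em, en, blockDiagonal'_apply_ne _ _ _ hij]
  rw [hblock, nullity_submatrix_equiv, nullity_blockDiagonal']

end Pencil

section MonicPencil

open Matrix

variable {I : Type*} [Fintype I] [DecidableEq I] (A : Matrix I I ℂ) (μ : ℂ) {d : ℕ}

theorem curry_eq_neg_pow_mulVec_of_pencilBlockMat'_one {x : Fin d × I → ℂ}
    (hx : pencilBlockMat' A 1 μ d *ᵥ x = 0) (n : ℕ) (p q : Fin d) (hpq : (p : ℕ) + n = q) :
    Function.curry x p = (-(μ • 1 + A)) ^ n *ᵥ Function.curry x q := by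
  rw [pencilBlockMat'_mulVec_eq_zero_iff] at hx
  induction n generalizing p with
  | zero => rw [pow_zero, one_mulVec, show p = q from Fin.ext hpq]
  | succ n ih =>
    have hrow := hx.2 ⟨p + 1, by omega⟩ p rfl
    rw [one_mulVec] at hrow
    rw [pow_succ', ← mulVec_mulVec, ← ih ⟨p + 1, by omega⟩ (by simp; omega), neg_mulVec]
    exact eq_neg_of_add_eq_zero_right hrow

theorem pencilBlockMat'_one_mulVec_eq_zero_of_neg_pow_mulVec_eq_zero {v : I → ℂ}
    (hv : (-(μ • 1 + A)) ^ d *ᵥ v = 0) :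
    pencilBlockMat' A 1 μ d *ᵥ (fun x => ((-(μ • 1 + A)) ^ (d - 1 - x.1) *ᵥ v) x.2) = 0 := by
  set N := -(μ • (1 : Matrix I I ℂ) + A) with hN
  rw [pencilBlockMat'_mulVec_eq_zero_iff]
  refine ⟨fun p hp => ?_, fun p q hpq => ?_⟩
  · change (μ • 1 + A) *ᵥ (N ^ (d - 1 - p) *ᵥ v) = 0
    have := p.isLt
    rw [← neg_neg (μ • 1 + A), neg_mulVec, mulVec_mulVec, ← pow_succ',
      show d - 1 - p + 1 = d by omega, hv, neg_zero]
  · change (μ • 1 + A) *ᵥ (N ^ (d - 1 - p) *ᵥ v) + 1 *ᵥ (N ^ (d - 1 - q) *ᵥ v) = 0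
    have := p.isLt
    rw [one_mulVec, show d - 1 - q = d - 1 - p + 1 by omega, pow_succ', ← mulVec_mulVec, hN,
      neg_mulVec, add_neg_cancel]

theorem nullity_pencilBlockMat'_one (hd : 0 < d) :
    (pencilBlockMat' A 1 μ d).nullity = ((μ • 1 + A) ^ d).nullity := by
  set N := -(μ • (1 : Matrix I I ℂ) + A) with hN
  let last : Fin d := ⟨d - 1, by omega⟩
  let φ : LinearMap.ker (pencilBlockMat' A 1 μ d).mulVecLin →ₗ[ℂ]
      LinearMap.ker (N ^ d).mulVecLin :=
    (LinearMap.funLeft ℂ ℂ (Prod.mk last)).restrict fun x hx => by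
      rw [LinearMap.mem_ker, mulVecLin_apply] at hx ⊢
      have h₀ := curry_eq_neg_pow_mulVec_of_pencilBlockMat'_one A μ hx (d - 1) ⟨0, hd⟩ last
        (by simp [last])
      change N ^ d *ᵥ Function.curry x last = 0
      rw [show N ^ d = N * N ^ (d - 1) by rw [← pow_succ', Nat.sub_add_cancel hd],
        ← mulVec_mulVec, ← h₀, hN, neg_mulVec,
        ((pencilBlockMat'_mulVec_eq_zero_iff A 1 μ x).1 hx).1 ⟨0, hd⟩ rfl, neg_zero]
  have hinj : Function.Injective φ := by
    refine (injective_iff_map_eq_zero φ).2 fun x hx => Subtype.ext (funext fun ⟨p, j⟩ => ?_)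
    have hlast : Function.curry x.1 last = 0 := congrArg Subtype.val hx
    have hp := curry_eq_neg_pow_mulVec_of_pencilBlockMat'_one A μ x.2 (d - 1 - p) p last
      (by have := p.isLt; simp [last]; omega)
    rw [hlast, mulVec_zero] at hp
    exact congrFun hp j
  have hsurj : Function.Surjective φ := fun v =>
    ⟨⟨_, pencilBlockMat'_one_mulVec_eq_zero_of_neg_pow_mulVec_eq_zero A μ v.2⟩,
      Subtype.ext (funext fun j => by simp [φ, last])⟩
  rw [← nullity_neg_pow, nullity, nullity, (LinearEquiv.ofBijective φ ⟨hinj, hsurj⟩).finrank_eq]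

end MonicPencil

namespace KroneckerBlock

open Matrix

theorem Bmat_jordanFin (k : ℕ) (μ₀ : ℂ) :
    (jordanFin k μ₀).Bmat = (1 : Matrix (Fin (k + 1)) (Fin (k + 1)) ℂ) := by
  refine Matrix.ext fun (i j : Fin (k + 1)) => ?_
  simp [Bmat, one_apply, Fin.ext_iff, eq_comm]

theorem Amat_jordanFin (k : ℕ) (μ₀ : ℂ) :
    (jordanFin k μ₀).Amat =
      (upperShift ℂ (k + 1) - μ₀ • 1 : Matrix (Fin (k + 1)) (Fin (k + 1)) ℂ) := by
  refine Matrix.ext fun (i j : Fin (k + 1)) => ?_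
  simp only [Amat, upperShift, Matrix.sub_apply, Matrix.smul_apply, one_apply, Fin.ext_iff,
    smul_eq_mul]
  split_ifs <;> first | omega | simp

theorem Bmat_jordanInf (k : ℕ) : (jordanInf k).Bmat = upperShift ℂ (k + 1) := rfl

theorem Amat_jordanInf (k : ℕ) :
    (jordanInf k).Amat = (1 : Matrix (Fin (k + 1)) (Fin (k + 1)) ℂ) := by
  refine Matrix.ext fun (i j : Fin (k + 1)) => ?_
  simp [Amat, one_apply, Fin.ext_iff, eq_comm]

theorem pencil_leftSing_submatrix_succ (k : ℕ) (μ : ℂ) :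
    (μ • (leftSing k).Bmat + (leftSing k).Amat).submatrix Fin.succ id =
      (μ • upperShift ℂ k + 1 : Matrix (Fin k) (Fin k) ℂ) := by
  refine Matrix.ext fun (i j : Fin k) => ?_
  show μ * (leftSing k).Bmat i.succ j + (leftSing k).Amat i.succ j = _
  simp [Amat, Bmat, upperShift, one_apply, Fin.ext_iff, eq_comm]

variable (μ : ℂ) {d : ℕ}

theorem nullity_pencilBlockMat'_jordanFin (k : ℕ) (μ₀ : ℂ) (hd : 0 < d) :
    (pencilBlockMat' (jordanFin k μ₀).Amat (jordanFin k μ₀).Bmat μ d).nullity =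
      if μ₀ = μ then min d (k + 1) else 0 := by
  calc (pencilBlockMat' (jordanFin k μ₀).Amat (jordanFin k μ₀).Bmat μ d).nullity
      = (pencilBlockMat' (upperShift ℂ (k + 1) - μ₀ • 1) 1 μ d).nullity := by
        rw [Amat_jordanFin, Bmat_jordanFin]
        -- the two sides differ only in the index types `Fin (jordanFin k μ₀).rows`, `Fin (k + 1)`
        rfl
    _ = (((μ - μ₀) • 1 + upperShift ℂ (k + 1)) ^ d).nullity := by
        rw [nullity_pencilBlockMat'_one _ _ hd, sub_smul, add_sub, sub_add_eq_add_sub, add_comm]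
    _ = if μ₀ = μ then min d (k + 1) else 0 := by
        split_ifs with h
        · rw [h, sub_self, zero_smul, zero_add, nullity_upperShift_pow]
        · exact nullity_eq_zero_of_injective <| mulVec_injective_of_isUnit <|
            (isUnit_smul_one_add_upperShift (sub_ne_zero.2 (Ne.symm h)) _).pow d

theorem nullity_pencilBlockMat'_jordanInf (k : ℕ) :
    (pencilBlockMat' (jordanInf k).Amat (jordanInf k).Bmat μ d).nullity = 0 := by
  refine nullity_eq_zero_of_injective (pencilBlockMat'_mulVec_injective _ _ μ ?_)
  rw [Amat_jordanInf, Bmat_jordanInf]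
  exact mulVec_injective_of_isUnit (isUnit_smul_upperShift_add_one μ _)

theorem nullity_pencilBlockMat'_leftSing (k : ℕ) :
    (pencilBlockMat' (leftSing k).Amat (leftSing k).Bmat μ d).nullity = 0 := by
  refine nullity_eq_zero_of_injective (pencilBlockMat'_mulVec_injective _ _ μ ?_)
  have hinj := mulVec_injective_of_isUnit (isUnit_smul_upperShift_add_one μ k)
  rw [← pencil_leftSing_submatrix_succ] at hinj
  exact fun v w h => hinj (congrArg (· ∘ Fin.succ) h)

theorem nullity_pencilBlockMat'_rightSing (k : ℕ) :
    (pencilBlockMat' (rightSing k).Amat (rightSing k).Bmat μ d).nullity = d := by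
  have hR := (pencilBlockMat' (rightSing k).Amat (rightSing k).Bmat μ d).rank_add_nullity
  have hL := (pencilBlockMat' (leftSing k).Amat (leftSing k).Bmat μ d).rank_add_nullity
  rw [nullity_pencilBlockMat'_leftSing, ← rank_pencilBlockMat'_transpose] at hL
  simp only [Fintype.card_prod, Fintype.card_fin] at hR hL
  -- `R_k = (R_kᵀ)ᵀ` holds by definition: `(rightSing k).Amat = (leftSing k).Amatᵀ`, same for `Bmat`
  change (pencilBlockMat' (rightSing k).Amat (rightSing k).Bmat μ d).rank + 0 = d * k at hL
  change _ = d * (k + 1) at hR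
  rw [mul_add, mul_one] at hR
  omega

theorem nullity_pencilBlockMat' (b : KroneckerBlock) (hd : 0 < d) :
    (pencilBlockMat' b.Amat b.Bmat μ d).nullity =
      b.jordanContribution d μ + if b.isRightSing then d else 0 := by
  cases b <;> simp [nullity_pencilBlockMat'_jordanFin, nullity_pencilBlockMat'_jordanInf,
    nullity_pencilBlockMat'_leftSing, nullity_pencilBlockMat'_rightSing, hd, jordanContribution,
    isRightSing]

end KroneckerBlock

/-- Nullity formula for `P_μ^d(L)` of a pencil `L` in Kronecker canonical form: the nullity
`d·n − rank P_μ^d(L)` equals the sum of `min(d, k_j)` over the Jordan blocks at the finite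
eigenvalue `μ`, plus `d` times the number of right singular blocks. -/
theorem nullity_pencilBlockMat_kcf (N : ℕ) (blocks : Fin N → KroneckerBlock)
    (μ : ℂ) (d : ℕ) (hd : 1 ≤ d) :
    d * (∑ i : Fin N, (blocks i).cols)
        - (pencilBlockMat'
            (Matrix.blockDiagonal' (fun i : Fin N => (blocks i).Amat))
            (Matrix.blockDiagonal' (fun i : Fin N => (blocks i).Bmat)) μ d).rank
      = (∑ i : Fin N, (blocks i).jordanContribution d μ)
        + d * (Finset.univ.filter (fun i : Fin N => (blocks i).isRightSing = true)).card := by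
  set P := pencilBlockMat' (Matrix.blockDiagonal' fun i => (blocks i).Amat)
    (Matrix.blockDiagonal' fun i => (blocks i).Bmat) μ d
  have hnullity : P.nullity = (∑ i, (blocks i).jordanContribution d μ) +
      d * (Finset.univ.filter fun i => (blocks i).isRightSing = true).card := by
    simp only [P, nullity_pencilBlockMat'_blockDiagonal',
      KroneckerBlock.nullity_pencilBlockMat' μ _ hd, Finset.sum_add_distrib, Finset.sum_ite,
      Finset.sum_const_zero, add_zero, Finset.sum_const, smul_eq_mul, mul_comm d]
  have hrank := P.rank_add_nullity
  simp only [Fintype.card_prod, Fintype.card_fin, Fintype.card_sigma] at hrank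
  omega
end
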